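/- arXiv:0909.2190 — 5 statements merged into one kernel-verified Lean document; each statement's English description precedes it below -/
import Mathlib

section
/- Every almost d-polycyclic group has a d-polycyclic normal subgroup of finite index. Here a group H is 0-polycyclic if trivial, (d+1)-polycyclic if it has a d-polycyclic normal subgroup N with H/N a finitely generated abelian group of rank 1; and H is almost d-polycyclic if it has a chain H = H₁ ⊵ H₂ ⊵ ⋯ ⊵ H_{2d+2} = 1 with each H_{2i}/H_{2i+1} finite and each H_{2i+1}/H_{2i+2} ≅ ℤ. -/
/-!
Work down the chain: each `H (2i+1)` contains a `(d-i)`-polycyclic subgroup of finite index.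
Passing to a finite-index overgroup is free. For a surjection `φ : A → ℤ` whose kernel `M` has
a finite-index `k`-polycyclic subgroup `K`, `M` is finitely generated, so the `A`-conjugates of
`K`, all of index `[M : K]` in `M`, are finitely many; their intersection, the normal core `N`
of `K` in `A`, therefore still has finite index in `M`. With `φ t = 1`, the subgroup `N ⊔ ⟨t⟩`
is `(k+1)`-polycyclic with quotient `ℤ` and has finite index in `A`. At the top one takes a
normal core once more, using that `d`-polycyclicity passes to finite-index subgroups.
-/

/-- A finitely generated abelian group of rank 1: abelian, finitely generated, and
surjecting onto ℤ with finite kernel (i.e. isomorphic to ℤ × (finite)). -/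
def RankOneFGAbelian (A : Type*) [Group A] : Prop :=
  (∀ x y : A, x * y = y * x) ∧ Group.FG A ∧
    ∃ φ : A →* Multiplicative ℤ, Function.Surjective φ ∧ Finite φ.ker

/-- `d`-polycyclic subgroups: `K` is `0`-polycyclic iff trivial, and `(d+1)`-polycyclic
iff it has a normal subgroup `N` which is `d`-polycyclic with `K/N` a finitely
generated abelian group of rank 1. -/
def IsPolycyclicOf {G : Type*} [Group G] : ℕ → Subgroup G → Prop
  | 0, K => K = ⊥
  | d + 1, K => ∃ N : Subgroup G, N ≤ K ∧ ∃ hN : (N.subgroupOf K).Normal,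
      IsPolycyclicOf d N ∧
        (letI := hN; RankOneFGAbelian (↥K ⧸ N.subgroupOf K))

open Subgroup Pointwise

section FiniteGeneration

variable {G : Type*} [Group G]

theorem finite_monoidHom_of_fg {M : Type*} [Monoid M] [Finite M] [Group.FG G] :
    Finite (G →* M) := by
  obtain ⟨S, hS⟩ := Group.FG.out (G := G)
  refine Finite.of_injective (fun f : G →* M => fun s : (S : Set G) => f s) fun f g hfg => ?_
  exact MonoidHom.eq_of_eqOn_dense hS fun x hx => congrFun hfg ⟨x, hx⟩

-- `K` is the stabiliser of a point of `Fin n` under one of finitely many `G →* Perm (Fin n)`.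
theorem Subgroup.finite_setOf_index_eq [Group.FG G] {n : ℕ} (hn : n ≠ 0) :
    {K : Subgroup G | K.index = n}.Finite := by
  have := finite_monoidHom_of_fg (G := G) (M := Equiv.Perm (Fin n))
  refine (Set.finite_range fun fp : (G →* Equiv.Perm (Fin n)) × Fin n =>
    (MulAction.stabilizer (Equiv.Perm (Fin n)) fp.2).comap fp.1).subset fun K hK => ?_
  have hcard : Nat.card (G ⧸ K) = n := by rw [← index_eq_card]; exact hK
  have : Finite (G ⧸ K) := Nat.finite_of_card_ne_zero (hcard ▸ hn)
  let e : G ⧸ K ≃ Fin n := Finite.equivFinOfCardEq hcard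
  refine ⟨((Equiv.permCongrHom e).toMonoidHom.comp (MulAction.toPermHom G (G ⧸ K)),
    e ((1 : G) : G ⧸ K)), ?_⟩
  ext g
  simp [Equiv.permCongrHom, Equiv.permCongr_apply, MulAction.mem_stabilizer_iff, QuotientGroup.eq]

theorem Subgroup.finite_setOf_le_relIndex_eq (M : Subgroup G) [Group.FG M] {n : ℕ}
    (hn : n ≠ 0) :
    {K : Subgroup G | K ≤ M ∧ K.relIndex M = n}.Finite :=
  ((finite_setOf_index_eq hn).image (map M.subtype)).subset fun K ⟨hKM, hK⟩ =>
    ⟨K.subgroupOf M, hK, by rw [subgroupOf_map_subtype, inf_eq_left.mpr hKM]⟩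

theorem Subgroup.relIndex_normalCore_ne_zero {K M : Subgroup G} [M.Normal] [Group.FG M]
    (hKM : K ≤ M) (hK : K.relIndex M ≠ 0) : K.normalCore.relIndex M ≠ 0 := by
  let conj (g : G) : Subgroup G := K.map (MulAut.conj g)
  have hconj (g : G) : conj g ≤ M ∧ (conj g).relIndex M = K.relIndex M := by
    have hM : M.map (MulAut.conj g) = M := Normal.map_conj_eq M g
    refine ⟨hM ▸ map_mono hKM, ?_⟩
    calc (conj g).relIndex M = (conj g).relIndex (M.map (MulAut.conj g)) := by rw [hM]
      _ = K.relIndex M := relIndex_map_map_of_injective _ _ (MulAut.conj g).injective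
  have : Finite (Set.range conj) :=
    ((finite_setOf_le_relIndex_eq M hK).subset (Set.range_subset_iff.mpr hconj)).to_subtype
  have hcore : K.normalCore = ⨅ L : Set.range conj, (L : Subgroup G) := by
    rw [iInf_range' (fun L : Subgroup G => L) conj]
    exact normalCore_eq_iInf_map_conj K
  rw [hcore]
  exact relIndex_iInf_ne_zero fun ⟨_, g, hg⟩ => hg ▸ (hconj g).2 ▸ hK

theorem Group.fg_of_fg_normal_of_fg_quotient (N : Subgroup G) [N.Normal] [Group.FG N]
    [Group.FG (G ⧸ N)] : Group.FG G := by
  obtain ⟨S, hS⟩ := Group.FG.out (G := G ⧸ N)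
  set T := closure (Quotient.out '' (S : Set (G ⧸ N)))
  have hT : T.map (QuotientGroup.mk' N) = ⊤ := by
    rw [MonoidHom.map_closure, ← Set.image_comp]
    simpa using hS
  have hTN := comap_map_eq (QuotientGroup.mk' N) T
  rw [hT, comap_top, QuotientGroup.ker_mk'] at hTN
  rw [Group.fg_def, hTN]
  exact ((Subgroup.fg_iff _).mpr ⟨_, rfl, S.finite_toSet.image _⟩).sup
    ((Group.fg_iff_subgroup_fg N).mp ‹_›)

theorem Group.fg_of_fg_finiteIndex (K : Subgroup G) [K.FiniteIndex] [Group.FG K] :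
    Group.FG G := by
  set T := closure (Set.range fun q : G ⧸ K => q.out)
  have hTK : T ⊔ K = ⊤ := by
    refine eq_top_iff.mpr fun g _ => ?_
    have hg : (Quotient.out (g : G ⧸ K))⁻¹ * g ∈ K :=
      QuotientGroup.leftRel_apply.mp (Quotient.exact (Quotient.out_eq _))
    simpa using mul_mem_sup (subset_closure ⟨g, rfl⟩ : _ ∈ T) hg
  rw [Group.fg_def, ← hTK]
  exact ((Subgroup.fg_iff _).mpr ⟨_, rfl, Set.finite_range _⟩).sup
    ((Group.fg_iff_subgroup_fg K).mp ‹_›)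

end FiniteGeneration

section Subgroups

variable {G H : Type*} [Group G] [Group H]

theorem Subgroup.index_eq_relIndex_of_sup_eq_top {K L : Subgroup G} [K.Normal] (h : K ⊔ L = ⊤) :
    L.index = L.relIndex K := by
  have hstab : MulAction.stabilizer K ((1 : G) : G ⧸ L) = L.subgroupOf K := by
    ext k
    change (k : G) • ((1 : G) : G ⧸ L) = _ ↔ _
    rw [← MulAction.mem_stabilizer_iff, MulAction.stabilizer_quotient, mem_subgroupOf]
  have horbit : MulAction.orbit K ((1 : G) : G ⧸ L) = Set.univ := by
    refine Set.eq_univ_of_forall fun q => QuotientGroup.induction_on q fun g => ?_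
    obtain ⟨k, hk, l, hl, rfl⟩ : g ∈ (K : Set G) * L := by rw [← normal_mul, h]; trivial
    refine ⟨⟨k, hk⟩, ?_⟩
    change ((k * 1 : G) : G ⧸ L) = _
    rw [QuotientGroup.eq]
    simpa using hl
  rw [relIndex, ← hstab, MulAction.index_stabilizer, horbit, Set.ncard_univ, index_eq_card]

theorem Subgroup.map_equivMapOfInjective_subgroupOf (f : G →* H) (hf : Function.Injective f)
    (N K : Subgroup G) :
    (N.subgroupOf K).map (K.equivMapOfInjective f hf).toMonoidHom =
      (N.map f).subgroupOf (K.map f) := by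
  ext ⟨y, x, hx, rfl⟩
  simpa [mem_subgroupOf, hf.eq_iff, Subtype.ext_iff, coe_equivMapOfInjective_apply] using
    fun _ => hx

end Subgroups

namespace RankOneFGAbelian

variable {A B : Type*} [Group A] [Group B]

theorem multiplicative_int : RankOneFGAbelian (Multiplicative ℤ) :=
  ⟨mul_comm, inferInstance, MonoidHom.id _, Function.surjective_id, by
    rw [MonoidHom.ker_id]; infer_instance⟩

-- The image of `B` in `ℤ` has finite index, so it is infinite cyclic.
theorem of_injective (hA : RankOneFGAbelian A) (f : B →* A) (hf : Function.Injective f)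
    [f.range.FiniteIndex] : RankOneFGAbelian B := by
  obtain ⟨hcomm, hfgA, φ, hφ, hker⟩ := hA
  have hfg : Group.FG B :=
    Group.fg_of_surjective (f := (MonoidHom.ofInjective hf).symm.toMonoidHom)
      (MonoidHom.ofInjective hf).symm.surjective
  set S := (φ.comp f).range with hS
  have : S.FiniteIndex := by
    have hdvd : S.index ∣ f.range.index := by
      rw [hS, MonoidHom.range_comp]; exact index_map_dvd _ hφ
    exact ⟨ne_zero_of_dvd_ne_zero FiniteIndex.index_ne_zero hdvd⟩
  have : Infinite S := by
    by_contra hfin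
    rw [not_infinite_iff_finite] at hfin
    exact not_finite_iff_infinite.mpr inferInstance
      ((finite_iff_finite_and_finiteIndex (H := S)).mpr ⟨hfin, this⟩)
  let e : Multiplicative ℤ ≃* S := intCyclicMulEquiv
  refine ⟨fun x y => hf (by simp only [map_mul, hcomm]), hfg,
    e.symm.toMonoidHom.comp (φ.comp f).rangeRestrict,
    e.symm.surjective.comp (φ.comp f).rangeRestrict_surjective, ?_⟩
  refine Finite.of_injective (fun x => (⟨f x, ?_⟩ : φ.ker)) fun x y hxy => ?_
  · have hx : (φ.comp f).rangeRestrict x = 1 := by simpa [MonoidHom.mem_ker] using x.2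
    simpa using congrArg Subtype.val hx
  · exact Subtype.ext (hf (congrArg Subtype.val hxy))

theorem of_mulEquiv (hA : RankOneFGAbelian A) (e : B ≃* A) : RankOneFGAbelian B :=
  have : e.toMonoidHom.range.FiniteIndex := by
    rw [MonoidHom.range_eq_top.mpr e.surjective]; infer_instance
  hA.of_injective e.toMonoidHom e.injective

theorem quotient_of_ker_eq (hA : RankOneFGAbelian A) (ψ : B →* A) [ψ.range.FiniteIndex]
    {N : Subgroup B} [N.Normal] (hker : ψ.ker = N) : RankOneFGAbelian (B ⧸ N) := by
  have hrange : (QuotientGroup.lift N ψ hker.ge).range = ψ.range := by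
    ext y
    constructor
    · rintro ⟨q, rfl⟩
      induction q using QuotientGroup.induction_on with | H x => exact ⟨x, rfl⟩
    · rintro ⟨x, rfl⟩
      exact ⟨x, rfl⟩
  have : (QuotientGroup.lift N ψ hker.ge).range.FiniteIndex := hrange ▸ inferInstance
  refine hA.of_injective (QuotientGroup.lift N ψ hker.ge) ((MonoidHom.ker_eq_bot_iff _).mp ?_)
  rw [QuotientGroup.ker_lift, hker, QuotientGroup.map_mk'_self]

end RankOneFGAbelian

namespace IsPolycyclicOf

variable {G H : Type*} [Group G] [Group H]

theorem map {f : G →* H} (hf : Function.Injective f) :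
    ∀ {d : ℕ} {K : Subgroup G}, IsPolycyclicOf d K → IsPolycyclicOf d (K.map f)
  | 0, K, (hK : K = ⊥) => by rw [hK, Subgroup.map_bot]; rfl
  | _ + 1, K, ⟨N, hNK, hN, hNpoly, hquot⟩ => by
    have hmap := map_equivMapOfInjective_subgroupOf f hf N K
    have hN' : ((N.map f).subgroupOf (K.map f)).Normal := hmap ▸ hN.map _ (MulEquiv.surjective _)
    exact ⟨N.map f, map_mono hNK, hN', hNpoly.map hf,
      hquot.of_mulEquiv (QuotientGroup.congr _ _ (K.equivMapOfInjective f hf) hmap).symm⟩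

theorem fg : ∀ {d : ℕ} {K : Subgroup G}, IsPolycyclicOf d K → Group.FG K
  | 0, _, (hK : _ = ⊥) => hK ▸ inferInstance
  | _ + 1, K, ⟨N, hNK, _, hNpoly, hquot⟩ =>
    have := hNpoly.fg
    have : Group.FG (N.subgroupOf K) :=
      Group.fg_of_surjective (f := (subgroupOfEquivOfLe hNK).symm.toMonoidHom)
        (MulEquiv.surjective _)
    have := hquot.2.1
    Group.fg_of_fg_normal_of_fg_quotient (N.subgroupOf K)

theorem of_le_of_relIndex_ne_zero : ∀ {d : ℕ} {K M : Subgroup G},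
    IsPolycyclicOf d M → K ≤ M → K.relIndex M ≠ 0 → IsPolycyclicOf d K
  | 0, _, _, (hM : _ = ⊥), hKM, _ => le_bot_iff.mp (hM ▸ hKM)
  | _ + 1, K, M, ⟨N, hNM, _, hNpoly, hquot⟩, hKM, hK => by
    let ψ : K →* M ⧸ N.subgroupOf M := (QuotientGroup.mk' _).comp (inclusion hKM)
    have hker : ψ.ker = (N ⊓ K).subgroupOf K := by
      ext x
      simp [ψ, mem_subgroupOf]
    have : ψ.range.FiniteIndex := by
      have hdvd : ψ.range.index ∣ K.relIndex M := by
        rw [MonoidHom.range_comp, inclusion_range]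
        exact index_map_dvd _ (QuotientGroup.mk'_surjective _)
      exact ⟨ne_zero_of_dvd_ne_zero hK hdvd⟩
    have hNK : ((N ⊓ K).subgroupOf K).Normal := hker ▸ ψ.normal_ker
    refine ⟨N ⊓ K, inf_le_right, hNK, hNpoly.of_le_of_relIndex_ne_zero inf_le_left ?_,
      hquot.quotient_of_ker_eq ψ hker⟩
    rw [inf_relIndex_left]
    exact mt (relIndex_eq_zero_of_le_right hNM) hK

end IsPolycyclicOf

section IntExtension

variable {A : Type*} [Group A] {φ : A →* Multiplicative ℤ} {t : A} {N : Subgroup A}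

theorem ker_comp_subtype_sup_zpowers [N.Normal] (ht : φ t = Multiplicative.ofAdd 1)
    (hNφ : N ≤ φ.ker) :
    (φ.comp (N ⊔ zpowers t).subtype).ker = N.subgroupOf (N ⊔ zpowers t) := by
  have hpow (m : ℤ) : φ (t ^ m) = Multiplicative.ofAdd m := by
    rw [map_zpow, ht, ← ofAdd_zsmul, smul_eq_mul, mul_one]
  have hpowN (m : ℤ) : t ^ m ∈ N ↔ m = 0 := by
    refine ⟨fun h => ?_, fun h => h ▸ (zpow_zero t).symm ▸ N.one_mem⟩
    simpa [hpow] using hNφ h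
  ext ⟨x, hx⟩
  obtain ⟨n, hn, _, ⟨m, rfl⟩, rfl⟩ : x ∈ (N : Set A) * (zpowers t : Set A) := by
    rwa [← normal_mul]
  simp [MonoidHom.mem_ker, mem_subgroupOf, MonoidHom.mem_ker.mp (hNφ hn), hpow,
    N.mul_mem_cancel_left hn, hpowN]

theorem IsPolycyclicOf.sup_zpowers [N.Normal] {d : ℕ} (ht : φ t = Multiplicative.ofAdd 1)
    (hNφ : N ≤ φ.ker) (hN : IsPolycyclicOf d N) : IsPolycyclicOf (d + 1) (N ⊔ zpowers t) := by
  have hψ : Function.Surjective (φ.comp (N ⊔ zpowers t).subtype) := fun z =>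
    ⟨⟨t ^ Multiplicative.toAdd z, mem_sup_right (zpow_mem_zpowers t _)⟩, by
      simp [map_zpow, ht, ← ofAdd_zsmul]⟩
  have : (φ.comp (N ⊔ zpowers t).subtype).range.FiniteIndex := by
    rw [MonoidHom.range_eq_top.mpr hψ]; infer_instance
  exact ⟨N, le_sup_left, inferInstance, hN,
    RankOneFGAbelian.multiplicative_int.quotient_of_ker_eq _
      (ker_comp_subtype_sup_zpowers ht hNφ)⟩

theorem finiteIndex_sup_zpowers (ht : φ t = Multiplicative.ofAdd 1)
    (hN : N.relIndex φ.ker ≠ 0) :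
    (N ⊔ zpowers t).FiniteIndex := by
  have htop : φ.ker ⊔ (N ⊔ zpowers t) = ⊤ := by
    refine eq_top_iff.mpr fun x _ => ?_
    have hx : x * t ^ (-Multiplicative.toAdd (φ x)) ∈ φ.ker := by
      simp [MonoidHom.mem_ker, map_zpow, ht, ← ofAdd_zsmul]
    simpa using mul_mem_sup hx (mem_sup_right (zpow_mem_zpowers t (Multiplicative.toAdd (φ x))))
  rw [finiteIndex_iff, index_eq_relIndex_of_sup_eq_top htop]
  exact mt (relIndex_eq_zero_of_le_left le_sup_left) hN

end IntExtension

def IsVirtuallyPolycyclicOf (d : ℕ) (A : Type*) [Group A] : Prop :=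
  ∃ K : Subgroup A, K.FiniteIndex ∧ IsPolycyclicOf d K

namespace IsVirtuallyPolycyclicOf

variable {d : ℕ} {A B : Type*} [Group A] [Group B]

theorem of_finite [Finite A] : IsVirtuallyPolycyclicOf 0 A :=
  ⟨⊥, inferInstance, rfl⟩

theorem of_mulEquiv (e : A ≃* B) : IsVirtuallyPolycyclicOf d A → IsVirtuallyPolycyclicOf d B
  | ⟨K, hK, hpoly⟩ => ⟨K.map (e : A →* B),
      ⟨by rw [index_map_equiv]; exact hK.index_ne_zero⟩, hpoly.map e.injective⟩

theorem of_finiteIndex (M : Subgroup A) [M.FiniteIndex] :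
    IsVirtuallyPolycyclicOf d M → IsVirtuallyPolycyclicOf d A
  | ⟨K, hK, hpoly⟩ => ⟨K.map M.subtype,
      ⟨by rw [index_map_subtype]; exact mul_ne_zero hK.index_ne_zero FiniteIndex.index_ne_zero⟩,
      hpoly.map M.subtype_injective⟩

theorem fg : IsVirtuallyPolycyclicOf d A → Group.FG A
  | ⟨K, _, hpoly⟩ => have := hpoly.fg; Group.fg_of_fg_finiteIndex K

theorem succ_of_ker {φ : A →* Multiplicative ℤ} (hφ : Function.Surjective φ)
    (h : IsVirtuallyPolycyclicOf d φ.ker) : IsVirtuallyPolycyclicOf (d + 1) A := by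
  have := h.fg
  obtain ⟨K, hK, hpoly⟩ := h
  set K' := K.map φ.ker.subtype
  have hK'φ : K' ≤ φ.ker := map_subtype_le K
  have hK' : K'.relIndex φ.ker ≠ 0 := by
    rw [relIndex, subgroupOf, comap_map_eq_self_of_injective φ.ker.subtype_injective]
    exact hK.index_ne_zero
  have hN := relIndex_normalCore_ne_zero hK'φ hK'
  have hNpoly : IsPolycyclicOf d K'.normalCore :=
    (hpoly.map φ.ker.subtype_injective).of_le_of_relIndex_ne_zero K'.normalCore_le
      (mt (relIndex_eq_zero_of_le_right hK'φ) hN)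
  obtain ⟨t, ht⟩ := hφ (Multiplicative.ofAdd 1)
  exact ⟨_, finiteIndex_sup_zpowers ht hN, hNpoly.sup_zpowers ht (K'.normalCore_le.trans hK'φ)⟩

theorem exists_normal_finiteIndex (h : IsVirtuallyPolycyclicOf d A) :
    ∃ N : Subgroup A, N.Normal ∧ N.FiniteIndex ∧ IsPolycyclicOf d N := by
  obtain ⟨K, hK, hpoly⟩ := h
  refine ⟨K.normalCore, inferInstance, inferInstance,
    hpoly.of_le_of_relIndex_ne_zero K.normalCore_le ?_⟩
  exact ne_zero_of_dvd_ne_zero FiniteIndex.index_ne_zero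
    (relIndex_dvd_index_of_le K.normalCore_le)

variable {G : Type*} [Group G] {K L : Subgroup G}

theorem of_le_of_finite_quotient (hKL : K ≤ L) [Finite (L ⧸ K.subgroupOf L)]
    (h : IsVirtuallyPolycyclicOf d K) : IsVirtuallyPolycyclicOf d L :=
  have := finiteIndex_of_finite_quotient (H := K.subgroupOf L)
  (h.of_mulEquiv (subgroupOfEquivOfLe hKL).symm).of_finiteIndex _

theorem succ_of_le_of_ker_eq (hKL : K ≤ L) {φ : L →* Multiplicative ℤ}
    (hφ : Function.Surjective φ) (hker : φ.ker = K.subgroupOf L)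
    (h : IsVirtuallyPolycyclicOf d K) : IsVirtuallyPolycyclicOf (d + 1) L :=
  succ_of_ker hφ (h.of_mulEquiv ((subgroupOfEquivOfLe hKL).symm.trans
    (MulEquiv.subgroupCongr hker.symm)))

end IsVirtuallyPolycyclicOf

theorem almost_polycyclic_has_polycyclic_finite_index_general
    {G : Type*} [Group G] (d : ℕ) (H : ℕ → Subgroup G)
    (htop : H 1 = ⊤) (hbot : H (2 * d + 2) = ⊥)
    (hle : ∀ i, 1 ≤ i → i ≤ 2 * d + 1 → H (i + 1) ≤ H i)
    (hfin : ∀ i, i ≤ d →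
      Finite (↥(H (2 * i + 1)) ⧸ (H (2 * i + 2)).subgroupOf (H (2 * i + 1))))
    (hZ : ∀ i, 1 ≤ i → i ≤ d →
      ∃ φ : ↥(H (2 * i)) →* Multiplicative ℤ, Function.Surjective φ ∧
        φ.ker = (H (2 * i + 1)).subgroupOf (H (2 * i))) :
    ∃ N : Subgroup G, N.Normal ∧ N.FiniteIndex ∧ IsPolycyclicOf d N := by
  have hchain : ∀ k j, j + k = d → IsVirtuallyPolycyclicOf k (H (2 * j + 1)) := by
    intro k
    induction k with
    | zero =>
      intro j hj
      obtain rfl : j = d := by omega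
      have := hfin j le_rfl
      have : Finite (H (2 * j + 2)) := by rw [hbot]; infer_instance
      exact IsVirtuallyPolycyclicOf.of_finite.of_le_of_finite_quotient (hle _ (by omega) le_rfl)
    | succ k ih =>
      intro j hj
      obtain ⟨φ, hφ, hker⟩ := hZ (j + 1) (by omega) (by omega)
      have := hfin j (by omega)
      exact ((ih (j + 1) (by omega)).succ_of_le_of_ker_eq (hle _ (by omega) (by omega)) hφ
        hker).of_le_of_finite_quotient (hle _ (by omega) (by omega))
  have hG : IsVirtuallyPolycyclicOf d G :=
    (hchain d 0 (zero_add d)).of_mulEquiv ((MulEquiv.subgroupCongr htop).trans topEquiv)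
  exact hG.exists_normal_finiteIndex

/-- Every almost `d`-polycyclic group (a group with a subnormal chain
`G = H₁ ⊵ H₂ ⊵ ⋯ ⊵ H_{2d+2} = 1` whose successive quotients alternate between finite
groups and copies of ℤ, with `d` infinite cyclic factors) has a `d`-polycyclic normal
subgroup of finite index.  The isomorphism `H_j/H_{j+1} ≅ ℤ` is expressed via a
surjective homomorphism `H_j →* ℤ` with kernel `H_{j+1}`. -/
theorem almost_polycyclic_has_polycyclic_finite_index
    {G : Type*} [Group G] (d : ℕ) (H : ℕ → Subgroup G)
    (htop : H 1 = ⊤) (hbot : H (2 * d + 2) = ⊥)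
    (hle : ∀ i, 1 ≤ i → i ≤ 2 * d + 1 → H (i + 1) ≤ H i)
    (hnorm : ∀ i, 1 ≤ i → i ≤ 2 * d + 1 → ((H (i + 1)).subgroupOf (H i)).Normal)
    (hfin : ∀ i, i ≤ d →
      Finite (↥(H (2 * i + 1)) ⧸ (H (2 * i + 2)).subgroupOf (H (2 * i + 1))))
    (hZ : ∀ i, 1 ≤ i → i ≤ d →
      ∃ φ : ↥(H (2 * i)) →* Multiplicative ℤ, Function.Surjective φ ∧
        φ.ker = (H (2 * i + 1)).subgroupOf (H (2 * i))) :
    ∃ N : Subgroup G, N.Normal ∧ N.FiniteIndex ∧ IsPolycyclicOf d N :=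
  almost_polycyclic_has_polycyclic_finite_index_general d H htop hbot hle hfin hZ
end

section
/- Let E be a finitely generated group and N a normal subgroup of E such that E/N is finitely presented. Then N is finitely generated as a normal subgroup of E, i.e. N is the normal closure in E of some finite subset of N. -/
/-!
Lift a finite presentation `F/⟨⟨R⟩⟩ ≅ E/N` to a homomorphism `ψ : F → E`, and write each of the
finitely many generators `t` of `E` as `t = n_t ψ(w_t)` with `n_t ∈ N`. The normal closure `M` of
`ψ(R)` and the `n_t` lies in `N`, and `E = ψ(F) M`. If `ψ(u) m ∈ N` with `m ∈ M`, then `u` is a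
relation of `E/N`, so `u ∈ ⟨⟨R⟩⟩` and `ψ(u) ∈ M`; hence `N = M`.
-/

/-- A group is finitely presented if it is the quotient of a finitely generated free
group by the normal closure of a finite set of relators. -/
def GroupFinitelyPresented (Q : Type*) [Group Q] : Prop :=
  ∃ (m : ℕ) (rels : Finset (FreeGroup (Fin m))) (φ : FreeGroup (Fin m) →* Q),
    Function.Surjective φ ∧
      φ.ker = Subgroup.normalClosure (rels : Set (FreeGroup (Fin m)))

open Subgroup

section

variable {E Q F : Type*} [Group E] [Group Q] [Group F]

theorem FreeGroup.exists_comp_eq_of_surjective {ι : Type*} {q : E →* Q}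
    (hq : Function.Surjective q) (φ : FreeGroup ι →* Q) :
    ∃ ψ : FreeGroup ι →* E, q.comp ψ = φ :=
  ⟨FreeGroup.lift (Function.surjInv hq ∘ φ ∘ FreeGroup.of), by
    ext; simp [Function.surjInv_eq hq]⟩

theorem MonoidHom.range_sup_eq_top_of_closure_eq_top {ψ : F →* E} {M : Subgroup E}
    {T : Set E} (hT : closure T = ⊤) (w : E → F) (hw : ∀ t ∈ T, t * (ψ (w t))⁻¹ ∈ M) :
    ψ.range ⊔ M = ⊤ := by
  rw [eq_top_iff, ← hT, closure_le]
  intro t ht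
  have := mul_mem_sup (hw t ht) (ψ.mem_range.mpr ⟨w t, rfl⟩)
  rwa [inv_mul_cancel_right, sup_comm] at this

theorem MonoidHom.ker_le_of_range_sup_eq_top {q : E →* Q} {ψ : F →* E} {M : Subgroup E}
    [M.Normal] (hMq : M ≤ q.ker) (htop : ψ.range ⊔ M = ⊤)
    (hker : (q.comp ψ).ker.map ψ ≤ M) : q.ker ≤ M := by
  intro n hn
  obtain ⟨_, ⟨u, rfl⟩, m, hm, rfl⟩ := mem_sup_of_normal_right.mp (htop ▸ mem_top n)
  have hu : u ∈ (q.comp ψ).ker := by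
    simpa [MonoidHom.mem_ker.mp (hMq hm)] using hn
  exact mul_mem (hker ⟨u, hu, rfl⟩) hm

theorem exists_finset_normalClosure_eq_ker_of_finitelyPresented [Group.FG E] {q : E →* Q}
    (hq : Function.Surjective q) (hQ : GroupFinitelyPresented Q) :
    ∃ S : Finset E, normalClosure (S : Set E) = q.ker := by
  classical
  obtain ⟨m, rels, φ, hφ, hker⟩ := hQ
  obtain ⟨T, hT⟩ := Group.FG.out (G := E)
  obtain ⟨ψ, rfl⟩ := FreeGroup.exists_comp_eq_of_surjective hq φ
  choose w hw using fun t : E => hφ (q t)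
  let S := rels.image ψ ∪ T.image fun t => t * (ψ (w t))⁻¹
  have hSq : (S : Set E) ⊆ q.ker := by
    simp only [S, Finset.coe_union, Finset.coe_image, Set.union_subset_iff,
      Set.image_subset_iff]
    refine ⟨fun r hr => ?_, fun t _ => ?_⟩
    · exact (hker ▸ subset_normalClosure hr : r ∈ (q.comp ψ).ker)
    · simp [MonoidHom.mem_ker, ← MonoidHom.comp_apply, hw]
  refine ⟨S, le_antisymm (normalClosure_le_normal hSq) ?_⟩
  refine MonoidHom.ker_le_of_range_sup_eq_top (ψ := ψ) (normalClosure_le_normal hSq)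
    (MonoidHom.range_sup_eq_top_of_closure_eq_top hT w fun t ht => ?_) ?_
  · exact subset_normalClosure (by simpa [S] using Or.inr ⟨t, ht, rfl⟩)
  · rw [hker]
    exact (map_normalClosure_le _ ψ).trans
      (normalClosure_mono (by simp [S]))

end

/-- If `E` is finitely generated and `N ⊴ E` with `E/N` finitely presented, then `N`
is the normal closure in `E` of a finite subset of `N`. -/
theorem normal_subgroup_fg_as_normal_subgroup {E : Type*} [Group E]
    (hE : Group.FG E) (N : Subgroup E) (hN : N.Normal)
    (hQ : GroupFinitelyPresented (E ⧸ N)) :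
    ∃ S : Finset E, (S : Set E) ⊆ (N : Set E) ∧
      Subgroup.normalClosure (S : Set E) = N := by
  obtain ⟨S, hS⟩ :=
    exists_finset_normalClosure_eq_ker_of_finitelyPresented (QuotientGroup.mk'_surjective N) hQ
  rw [QuotientGroup.ker_mk'] at hS
  exact ⟨S, hS ▸ subset_normalClosure, hS⟩
end

section
/- Every discrete subgroup of the topological group ℝⁿ × (ℝ/ℤ)ᵐ is finitely generated; in fact it admits a generating set of at most n + m elements. -/
/-!
Lift to the covering group `ℝⁿ × ℝᵐ → ℝⁿ × (ℝ/ℤ)ᵐ`. Its kernel `0 × ℤᵐ` is discrete, so the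
preimage of a discrete subgroup is a discrete subgroup of `ℝⁿ⁺ᵐ`. A discrete subgroup of a real
vector space is a lattice in its real span, hence free of rank at most the dimension; the images
of a basis generate the original subgroup because the covering map is surjective.
-/

open Module Set

theorem AddMonoidHom.isDiscrete_preimage {G H : Type*} [AddGroup G] [TopologicalSpace G]
    [ContinuousAdd G] [AddGroup H] [TopologicalSpace H] {f : G →+ H} (hf : Continuous f)
    (hker : IsDiscrete (f.ker : Set G)) {s : Set H} (hs : IsDiscrete s) :
    IsDiscrete (f ⁻¹' s) := by
  refine hs.preimage' hf.continuousOn fun y => ?_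
  rcases (f ⁻¹' {y}).eq_empty_or_nonempty with h | ⟨a, ha⟩
  · exact h ▸ subsingleton_empty.isDiscrete
  · -- the translation `g ↦ -a + g` maps the fibre through `a` injectively into the kernel
    refine (hker.preimage (continuous_const_add (-a)).continuousOn
      (add_right_injective (-a))).mono fun g hg => ?_
    simp_all

theorem Submodule.finrank_le_of_discreteTopology {E : Type*} [NormedAddCommGroup E]
    [NormedSpace ℝ E] [FiniteDimensional ℝ E] (L : Submodule ℤ E) [DiscreteTopology L] :
    finrank ℤ L ≤ finrank ℝ E := by
  let V := span ℝ (L : Set E)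
  let L₀ := L.comap (V.subtype.restrictScalars ℤ)
  have hLV : (L : Set E) ⊆ V := subset_span
  let e : L₀ ≃ₗ[ℤ] L := comapSubtypeEquivOfLe (q := V.restrictScalars ℤ) hLV
  have : DiscreteTopology L₀ := DiscreteTopology.preimage_of_continuous_injective (L : Set E)
    V.subtype.continuous_of_finiteDimensional V.injective_subtype
  have : IsZLattice ℝ L₀ := ⟨by
    rw [← (map_injective_of_injective V.injective_subtype).eq_iff, map_span, map_top,
      range_subtype,
      show V.subtype '' L₀ = L from image_preimage_eq_of_subset (by simpa using hLV)]⟩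
  calc finrank ℤ L = finrank ℤ L₀ := e.finrank_eq.symm
    _ = finrank ℝ V := ZLattice.rank ℝ L₀
    _ ≤ finrank ℝ E := V.finrank_le

theorem AddSubgroup.exists_finset_closure_eq_card_le_finrank {E : Type*} [NormedAddCommGroup E]
    [NormedSpace ℝ E] [FiniteDimensional ℝ E] (L : AddSubgroup E) [DiscreteTopology L] :
    ∃ S : Finset E, closure (S : Set E) = L ∧ S.card ≤ finrank ℝ E := by
  classical
  let L' := L.toIntSubmodule
  have : DiscreteTopology L' := ‹DiscreteTopology L›
  let b := Module.finBasis ℤ L'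
  refine ⟨Finset.univ.image fun i => (b i : E), ?_, ?_⟩
  · rw [← Submodule.span_int_eq_addSubgroupClosure, Finset.coe_image, Finset.coe_univ,
      image_univ]
    have h := congrArg (Submodule.map L'.subtype) b.span_eq
    rw [Submodule.map_span, Submodule.map_top, Submodule.range_subtype, ← range_comp] at h
    exact congrArg Submodule.toAddSubgroup h
  · calc _ ≤ Fintype.card (Fin (finrank ℤ L')) := Finset.card_image_le
      _ = finrank ℤ L' := Fintype.card_fin _
      _ ≤ finrank ℝ E := L'.finrank_le_of_discreteTopology

section CoverMap

variable {ι κ : Type*}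

noncomputable def coverMap (ι κ : Type*) (p : ℝ) :
    (ι → ℝ) × (κ → ℝ) →+ (ι → ℝ) × (κ → AddCircle p) :=
  (AddMonoidHom.id _).prodMap ((QuotientAddGroup.mk' (AddSubgroup.zmultiples p)).compLeft κ)

theorem continuous_coverMap (p : ℝ) : Continuous (coverMap ι κ p) :=
  continuous_id.prodMap
    (continuous_pi fun i => (AddCircle.continuous_mk' p).comp (continuous_apply i))

theorem coverMap_surjective (p : ℝ) : Function.Surjective (coverMap ι κ p) :=
  Function.surjective_id.prodMap (QuotientAddGroup.mk'_surjective _).comp_left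

theorem mem_ker_coverMap {p : ℝ} {x : (ι → ℝ) × (κ → ℝ)} :
    x ∈ (coverMap ι κ p).ker ↔ x.1 = 0 ∧ ∀ i, x.2 i ∈ AddSubgroup.zmultiples p := by
  simp [coverMap, Prod.ext_iff, funext_iff]

theorem isDiscrete_ker_coverMap [Finite κ] (p : ℝ) :
    IsDiscrete ((coverMap ι κ p).ker : Set ((ι → ℝ) × (κ → ℝ))) := by
  let g : (coverMap ι κ p).ker → κ → AddSubgroup.zmultiples p :=
    fun x i => ⟨x.1.2 i, (mem_ker_coverMap.mp x.2).2 i⟩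
  refine isDiscrete_iff_discreteTopology.mpr
    (DiscreteTopology.of_continuous_injective (f := g) (by fun_prop) ?_)
  rintro ⟨x, hx⟩ ⟨y, hy⟩ hxy
  refine Subtype.ext (Prod.ext ?_ (funext fun i => ?_))
  · exact (mem_ker_coverMap.mp hx).1.trans (mem_ker_coverMap.mp hy).1.symm
  · exact congrArg Subtype.val (congrFun hxy i)

end CoverMap

/-- Every discrete subgroup of `ℝⁿ × (ℝ/ℤ)ᵐ` is finitely generated, by at most
`n + m` elements. -/
theorem discrete_subgroup_fg (n m : ℕ)
    (D : AddSubgroup ((Fin n → ℝ) × (Fin m → AddCircle (1 : ℝ))))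
    (hD : DiscreteTopology D) :
    ∃ S : Finset ((Fin n → ℝ) × (Fin m → AddCircle (1 : ℝ))),
      (↑S : Set ((Fin n → ℝ) × (Fin m → AddCircle (1 : ℝ)))) ⊆
          (D : Set ((Fin n → ℝ) × (Fin m → AddCircle (1 : ℝ)))) ∧
        AddSubgroup.closure (↑S : Set ((Fin n → ℝ) × (Fin m → AddCircle (1 : ℝ)))) = D ∧
        S.card ≤ n + m := by
  classical
  let π := coverMap (Fin n) (Fin m) 1
  have : DiscreteTopology (D.comap π) :=
    (π.isDiscrete_preimage (continuous_coverMap 1) (isDiscrete_ker_coverMap 1)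
      ⟨hD⟩).to_subtype
  obtain ⟨S, hS, hcard⟩ := (D.comap π).exists_finset_closure_eq_card_le_finrank
  have hgen : AddSubgroup.closure (S.image π : Set _) = D := by
    rw [Finset.coe_image, ← AddMonoidHom.map_closure, hS,
      AddSubgroup.map_comap_eq_self_of_surjective (coverMap_surjective 1)]
  refine ⟨S.image π, hgen ▸ AddSubgroup.subset_closure, hgen, ?_⟩
  calc (S.image π).card ≤ S.card := Finset.card_image_le
    _ ≤ finrank ℝ ((Fin n → ℝ) × (Fin m → ℝ)) := hcard
    _ = n + m := by simp
end

section
/- Let H and H′ be subgroups of a group G and suppose H is contained in the union of n right cosets of H′. Then H ∩ H′ has index at most n in H. -/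
/-!
`H` acts on the left cosets `G ⧸ H'`, and the stabilizer of the trivial coset is `H ∩ H'`, so
`[H : H ∩ H']` is the size of the `H`-orbit of `H'`. Inverting the cover turns the right cosets
`H' gᵢ` into left cosets `gᵢ⁻¹ H'`, and every coset `h H'` with `h ∈ H` is one of these.
-/

open MulAction
open scoped Pointwise

namespace Subgroup

variable {G : Type*} [Group G]

theorem smul_coe_one {H : Subgroup G} (K : Subgroup G) (h : H) :
    h • ((1 : G) : G ⧸ K) = ((h : G) : G ⧸ K) :=
  congrArg _ (mul_one (h : G))

theorem stabilizer_coe_one_eq_subgroupOf (H K : Subgroup G) :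
    stabilizer H ((1 : G) : G ⧸ K) = K.subgroupOf H := by
  ext h
  rw [mem_stabilizer_iff, smul_coe_one, QuotientGroup.eq, mul_one, inv_mem_iff, mem_subgroupOf]

theorem relIndex_eq_ncard_orbit (H K : Subgroup G) :
    K.relIndex H = (orbit H ((1 : G) : G ⧸ K)).ncard := by
  rw [relIndex, ← stabilizer_coe_one_eq_subgroupOf, index_stabilizer]

section LeftCosetCover

variable {ι : Type*} {H K : Subgroup G} {g : ι → G}

theorem orbit_subset_range_of_subset_iUnion_smul
    (hcov : (H : Set G) ⊆ ⋃ i, g i • (K : Set G)) :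
    orbit H ((1 : G) : G ⧸ K) ⊆ Set.range fun i ↦ (g i : G ⧸ K) := by
  rintro _ ⟨h, rfl⟩
  obtain ⟨i, hi⟩ := Set.mem_iUnion.mp (hcov h.2)
  dsimp only
  rw [smul_coe_one]
  exact ⟨i, QuotientGroup.eq.mpr ((mem_leftCoset_iff _).mp hi)⟩

variable [Finite ι]

theorem relIndex_ne_zero_of_subset_iUnion_smul
    (hcov : (H : Set G) ⊆ ⋃ i, g i • (K : Set G)) : K.relIndex H ≠ 0 := by
  rw [relIndex_eq_ncard_orbit]
  exact (Set.ncard_pos ((Set.finite_range _).subset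
    (orbit_subset_range_of_subset_iUnion_smul hcov))).mpr ⟨_, mem_orbit_self _⟩ |>.ne'

theorem relIndex_le_card_of_subset_iUnion_smul
    (hcov : (H : Set G) ⊆ ⋃ i, g i • (K : Set G)) : K.relIndex H ≤ Nat.card ι :=
  calc K.relIndex H = (orbit H ((1 : G) : G ⧸ K)).ncard := relIndex_eq_ncard_orbit H K
    _ ≤ (Set.range fun i ↦ (g i : G ⧸ K)).ncard :=
      Set.ncard_le_ncard (orbit_subset_range_of_subset_iUnion_smul hcov)
    _ ≤ Nat.card ι := Finite.card_range_le _

end LeftCosetCover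

theorem subset_iUnion_inv_smul_of_subset_iUnion_mul {ι : Type*} {H K : Subgroup G} {g : ι → G}
    (hcov : (H : Set G) ⊆ ⋃ i, (· * g i) '' (K : Set G)) :
    (H : Set G) ⊆ ⋃ i, (g i)⁻¹ • (K : Set G) := by
  intro h hh
  obtain ⟨i, x, hx, hxh⟩ := Set.mem_iUnion.mp (hcov (H.inv_mem hh))
  refine Set.mem_iUnion.mpr ⟨i, (mem_leftCoset_iff _).mpr ?_⟩
  rw [inv_inv, ← inv_inv h, ← hxh, mul_inv_rev, mul_inv_cancel_left]
  exact K.inv_mem hx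

end Subgroup

/-- If a subgroup `H` is contained in the union of `n` right cosets of `H'`, then
`H ∩ H'` has (finite) index at most `n` in `H`. -/
theorem relindex_le_of_cover_by_cosets {G : Type*} [Group G] (H H' : Subgroup G)
    (n : ℕ) (g : Fin n → G)
    (hcov : (H : Set G) ⊆ ⋃ i, (fun h => h * g i) '' (H' : Set G)) :
    0 < H'.relIndex H ∧ H'.relIndex H ≤ n := by
  have hleft := Subgroup.subset_iUnion_inv_smul_of_subset_iUnion_mul hcov
  exact ⟨Nat.pos_of_ne_zero (Subgroup.relIndex_ne_zero_of_subset_iUnion_smul hleft),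
    (Subgroup.relIndex_le_card_of_subset_iUnion_smul hleft).trans_eq (Nat.card_fin n)⟩
end

section
/- (Bergman–Lenstra) Let G be a group and H a subgroup such that the index [H : H ∩ gHg⁻¹] is at most n for every g ∈ G. Then there exists a subgroup N of G, normalized by every automorphism of G that preserves the commensurability class of H (in particular N can be taken normal in G when H has this uniform property under all conjugations), which is commensurable with H: both [H : H∩N] and [N : H∩N] are finite, with bounds depending only on n. -/
/-!
Let `m` be the least integer such that some finite intersection `K` of conjugates of `H` has
`[K : K ∩ gHg⁻¹] ≤ m` for every `g`, and let `N` be generated by all such `K`; the family is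
stable under conjugation, so `N` is normal, and it contains one of them, so `[H : H ∩ N]` is
finite. Given finitely many generators `K i`, their intersection `M` is again one of them, so by
minimality `[M : M ∩ F] = m` for some conjugate `F` of `H`. Since `M ≤ K i` and
`[K i : K i ∩ F] ≤ m`, counting cosets gives `K i ⊆ M F`; hence every `K i` stabilises the set
`M F`, and so does the subgroup they generate, which therefore lies in `M F`. This set meets at
most `m n` cosets of `H`, and `[N : N ∩ H] ≤ m n` follows by finite character.
-/

open scoped Pointwise

namespace Subgroup

variable {G : Type*} [Group G]

theorem surjective_quotientSubgroupOfEmbeddingOfLE_iff {M K : Subgroup G} (F : Subgroup G)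
    (hMK : M ≤ K) :
    Function.Surjective (quotientSubgroupOfEmbeddingOfLE F hMK) ↔ (K : Set G) ⊆ M * F := by
  constructor
  · intro h x hx
    obtain ⟨q, hq⟩ := h (QuotientGroup.mk ⟨x, hx⟩)
    induction q using QuotientGroup.induction_on with | H w =>
    rw [quotientSubgroupOfEmbeddingOfLE_apply_mk, QuotientGroup.eq, mem_subgroupOf] at hq
    exact ⟨w, w.2, _, hq, by simp⟩
  · rintro h q
    induction q using QuotientGroup.induction_on with | H x =>
    obtain ⟨w, hw, f, hf, hwf⟩ := h x.2
    refine ⟨QuotientGroup.mk ⟨w, hw⟩, ?_⟩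
    rw [quotientSubgroupOfEmbeddingOfLE_apply_mk, QuotientGroup.eq, mem_subgroupOf]
    simpa [← hwf] using hf

theorem coe_subset_mul_of_relIndex_le {M K F : Subgroup G} (hMK : M ≤ K)
    (hK : F.relIndex K ≠ 0) (hle : F.relIndex K ≤ F.relIndex M) : (K : Set G) ⊆ M * F := by
  have : Finite (K ⧸ F.subgroupOf K) := Nat.finite_of_card_ne_zero hK
  rw [← surjective_quotientSubgroupOfEmbeddingOfLE_iff F hMK]
  exact ((quotientSubgroupOfEmbeddingOfLE F hMK).injective.bijective_of_nat_card_le hle).2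

theorem relIndex_le_of_coe_subset_mul {M J F : Subgroup G} (hMJ : M ≤ J)
    (hJ : (J : Set G) ⊆ M * F) (hM : F.relIndex M ≠ 0) :
    F.relIndex J ≠ 0 ∧ F.relIndex J ≤ F.relIndex M := by
  have : Finite (M ⧸ F.subgroupOf M) := Nat.finite_of_card_ne_zero hM
  have hsurj := (surjective_quotientSubgroupOfEmbeddingOfLE_iff F hMJ).2 hJ
  have : Finite (J ⧸ F.subgroupOf J) := Finite.of_surjective _ hsurj
  exact ⟨Nat.card_pos.ne', Nat.card_le_card_of_surjective _ hsurj⟩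

theorem relIndex_le_mul_of_coe_subset_mul {H M J F : Subgroup G} (hMJ : M ≤ J)
    (hJ : (J : Set G) ⊆ M * F) (hM : F.relIndex M ≠ 0) (hF : H.relIndex F ≠ 0) :
    H.relIndex J ≠ 0 ∧ H.relIndex J ≤ F.relIndex M * H.relIndex F := by
  obtain ⟨hJ₀, hJle⟩ := relIndex_le_of_coe_subset_mul hMJ hJ hM
  have hFJ : H.relIndex (F ⊓ J) ≤ H.relIndex F := relIndex_le_of_le_right inf_le_left hF
  have hHF : (H ⊓ F).relIndex J ≠ 0 := by
    rw [← relIndex_inf_mul_relIndex]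
    exact mul_ne_zero (fun h ↦ hF (relIndex_eq_zero_of_le_right inf_le_left h)) hJ₀
  refine ⟨fun h ↦ hHF (relIndex_eq_zero_of_le_left inf_le_left h), ?_⟩
  calc H.relIndex J ≤ (H ⊓ F).relIndex J := relIndex_le_of_le_left inf_le_left hHF
    _ = H.relIndex (F ⊓ J) * F.relIndex J := relIndex_inf_mul_relIndex ..|>.symm
    _ ≤ F.relIndex M * H.relIndex F := by rw [mul_comm]; exact Nat.mul_le_mul hJle hFJ

theorem le_stabilizer_mul {M K F : Subgroup G} (hMK : M ≤ K) (hK : (K : Set G) ⊆ M * F) :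
    K ≤ MulAction.stabilizer G ((M : Set G) * F) := by
  have hsub : ∀ y ∈ K, y • ((M : Set G) * F) ⊆ M * F := by
    intro y hy
    calc y • ((M : Set G) * F) = (y • (M : Set G)) * F := (smul_mul_assoc ..).symm
      _ ⊆ (M * F) * F := by
        gcongr
        rintro _ ⟨w, hw, rfl⟩
        exact hK (K.mul_mem hy (hMK hw))
      _ = M * F := by rw [mul_assoc, coe_mul_coe]
  intro x hx
  refine MulAction.mem_stabilizer_iff.2 (subset_antisymm (hsub x hx) ?_)
  calc (M : Set G) * F = x • x⁻¹ • ((M : Set G) * F) := (smul_inv_smul ..).symm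
    _ ⊆ x • ((M : Set G) * F) := Set.smul_set_mono (hsub _ (K.inv_mem hx))

theorem coe_subset_of_le_stabilizer {P : Set G} (hP : 1 ∈ P) {J : Subgroup G}
    (hJ : J ≤ MulAction.stabilizer G P) : (J : Set G) ⊆ P := by
  intro x hx
  rw [← MulAction.mem_stabilizer_iff.1 (hJ hx)]
  exact ⟨1, hP, mul_one x⟩

theorem relIndex_iSup_ne_zero_of_directed {ι : Type*} [Nonempty ι] (H : Subgroup G)
    {J : ι → Subgroup G} (hJ : Directed (· ≤ ·) J) {k : ℕ}
    (hk : ∀ i, H.relIndex (J i) ≠ 0 ∧ H.relIndex (J i) ≤ k) : H.relIndex (⨆ i, J i) ≠ 0 := by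
  classical
  set N := ⨆ i, J i
  intro hN
  have : Infinite (N ⧸ H.subgroupOf N) := index_eq_zero_iff_infinite.1 hN
  obtain ⟨t, ht⟩ := Infinite.exists_subset_card_eq (N ⧸ H.subgroupOf N) (k + 1)
  obtain ⟨i, hi⟩ : ∃ i, ((t.image fun q ↦ (q.out : G)) : Set G) ⊆ J i := by
    refine (hJ.mono_comp _ fun _ _ h ↦ h).exists_mem_subset_of_finset_subset_biUnion ?_
    rw [Function.comp_def, ← coe_iSup_of_directed hJ]
    intro x hx
    obtain ⟨q, -, rfl⟩ := Finset.mem_image.1 hx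
    exact q.out.2
  let f : t → J i ⧸ H.subgroupOf (J i) := fun q ↦
    QuotientGroup.mk ⟨q.1.out, hi (Finset.mem_image_of_mem _ q.2)⟩
  have hf : Function.Injective f := by
    refine Function.Injective.of_comp
      (f := quotientSubgroupOfEmbeddingOfLE H (le_iSup J i)) fun q q' hqq' ↦ ?_
    change (QuotientGroup.mk q.1.out : N ⧸ H.subgroupOf N) = QuotientGroup.mk q'.1.out at hqq'
    simpa only [QuotientGroup.out_eq', Subtype.ext_iff] using hqq'
  have : Finite (J i ⧸ H.subgroupOf (J i)) := Nat.finite_of_card_ne_zero (hk i).1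
  have hcard := Nat.card_le_card_of_injective f hf
  rw [Nat.card_eq_fintype_card, Fintype.card_coe, ht] at hcard
  have hle := (hk i).2
  rw [relIndex, index] at hle
  omega

variable (H : Subgroup G)

inductive IsConjInter : Subgroup G → Prop
  | smul (g : ConjAct G) : IsConjInter (g • H)
  | inf {K L : Subgroup G} : IsConjInter K → IsConjInter L → IsConjInter (K ⊓ L)

def boundedConjInters (m : ℕ) : Set (Subgroup G) :=
  {K | IsConjInter H K ∧ ∀ g : ConjAct G, (g • H).relIndex K ≤ m}

variable {H}

theorem relIndex_smul_smul (a b : ConjAct G) :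
    (a • H).relIndex (b • H) = ((b⁻¹ * a) • H).relIndex H := by
  rw [← relIndex_pointwise_smul b⁻¹, inv_smul_smul, smul_smul]

namespace IsConjInter

theorem self : IsConjInter H H := by
  simpa using IsConjInter.smul (H := H) 1

theorem conj {K : Subgroup G} (hK : IsConjInter H K) (g : ConjAct G) :
    IsConjInter H (g • K) := by
  induction hK with
  | smul a => rw [smul_smul]; exact smul _
  | inf _ _ ihK ihL => rw [smul_inf]; exact ihK.inf ihL

theorem finset_inf' {ι : Type*} {s : Finset ι} (hs : s.Nonempty) {K : ι → Subgroup G}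
    (hK : ∀ i ∈ s, IsConjInter H (K i)) : IsConjInter H (s.inf' hs K) :=
  Finset.inf'_induction hs K (fun _ hK _ hL ↦ hK.inf hL) hK

theorem exists_le {K : Subgroup G} (hK : IsConjInter H K) : ∃ g : ConjAct G, K ≤ g • H := by
  induction hK with
  | smul g => exact ⟨g, le_rfl⟩
  | inf _ _ ihK _ => obtain ⟨g, hg⟩ := ihK; exact ⟨g, inf_le_left.trans hg⟩

variable (hH : ∀ g : ConjAct G, (g • H).relIndex H ≠ 0)
include hH

theorem smul_relIndex_ne_zero {K : Subgroup G} (hK : IsConjInter H K) (g : ConjAct G) :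
    (g • H).relIndex K ≠ 0 := by
  obtain ⟨b, hb⟩ := hK.exists_le
  have hbg := hH (b⁻¹ * g)
  rw [← relIndex_smul_smul] at hbg
  exact fun h ↦ hbg (relIndex_eq_zero_of_le_right hb h)

theorem relIndex_ne_zero {K : Subgroup G} (hK : IsConjInter H K) : K.relIndex H ≠ 0 := by
  induction hK with
  | smul g => exact hH g
  | inf _ _ ihK ihL => exact relIndex_inf_ne_zero ihK ihL

end IsConjInter

theorem smul_mem_boundedConjInters {m : ℕ} {K : Subgroup G}
    (hK : K ∈ boundedConjInters H m) (g : ConjAct G) : g • K ∈ boundedConjInters H m := by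
  refine ⟨hK.1.conj g, fun a ↦ ?_⟩
  have ha : a • H = g • (g⁻¹ * a) • H := by rw [smul_smul, mul_inv_cancel_left]
  rw [ha, relIndex_pointwise_smul]
  exact hK.2 _

theorem normal_sSup_of_smul_mem {𝒮 : Set (Subgroup G)}
    (h𝒮 : ∀ g : ConjAct G, ∀ K ∈ 𝒮, g • K ∈ 𝒮) : (sSup 𝒮).Normal := by
  refine ⟨fun x hx g ↦ ?_⟩
  have : sSup 𝒮 ≤ (sSup 𝒮).comap (MulAut.conj g).toMonoidHom :=
    sSup_le fun K hK ↦ map_le_iff_le_comap.1 (le_sSup (h𝒮 (ConjAct.toConjAct g) K hK))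
  exact this hx

theorem exists_min_boundedConjInters {n : ℕ}
    (hn : ∀ g : ConjAct G, (g • H).relIndex H ≤ n) :
    ∃ m, (boundedConjInters H m).Nonempty ∧
      ∀ K, IsConjInter H K → ∃ g : ConjAct G, m ≤ (g • H).relIndex K := by
  classical
  have hex : ∃ m, (boundedConjInters H m).Nonempty := ⟨n, H, IsConjInter.self, hn⟩
  refine ⟨Nat.find hex, Nat.find_spec hex, fun K hK ↦ ?_⟩
  by_contra! hlt
  exact Nat.find_min hex (Nat.sub_one_lt (Nat.ne_zero_of_lt (hlt 1)))
    ⟨K, hK, fun g ↦ Nat.le_sub_one_of_lt (hlt g)⟩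

section MinimalBound

variable {m n : ℕ} (hH : ∀ g : ConjAct G, (g • H).relIndex H ≠ 0)
  (hn : ∀ g : ConjAct G, (g • H).relIndex H ≤ n)
  (hmin : ∀ K, IsConjInter H K → ∃ g : ConjAct G, m ≤ (g • H).relIndex K)
include hH hn hmin

theorem relIndex_finset_sup_boundedConjInters {ι : Type*} {s : Finset ι} (hs : s.Nonempty)
    {K : ι → Subgroup G} (hK : ∀ i ∈ s, K i ∈ boundedConjInters H m) :
    H.relIndex (s.sup K) ≠ 0 ∧ H.relIndex (s.sup K) ≤ m * n := by
  obtain ⟨i₀, hi₀⟩ := hs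
  set M := s.inf' ⟨i₀, hi₀⟩ K
  have hMK : ∀ i ∈ s, M ≤ K i := fun i hi ↦ Finset.inf'_le K hi
  have hM : IsConjInter H M := IsConjInter.finset_inf' _ fun i hi ↦ (hK i hi).1
  obtain ⟨g, hg⟩ := hmin M hM
  have hMg : (g • H).relIndex M ≤ m :=
    (relIndex_le_of_le_right (hMK i₀ hi₀) ((hK i₀ hi₀).1.smul_relIndex_ne_zero hH g)).trans
      ((hK i₀ hi₀).2 g)
  have hsub :
      ((s.sup K : Subgroup G) : Set G) ⊆ (M : Set G) * ((g • H : Subgroup G) : Set G) := by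
    refine coe_subset_of_le_stabilizer
      (Set.mem_mul.2 ⟨1, M.one_mem, 1, (g • H).one_mem, mul_one 1⟩) ?_
    refine Finset.sup_le fun i hi ↦ le_stabilizer_mul (hMK i hi) ?_
    exact coe_subset_mul_of_relIndex_le (hMK i hi) ((hK i hi).1.smul_relIndex_ne_zero hH g)
      (((hK i hi).2 g).trans hg)
  have hHg : H.relIndex (g • H) = (g⁻¹ • H).relIndex H := by
    simpa using relIndex_smul_smul (H := H) 1 g
  obtain ⟨hne, hle⟩ := relIndex_le_mul_of_coe_subset_mul
    ((hMK i₀ hi₀).trans (Finset.le_sup hi₀)) hsub (hM.smul_relIndex_ne_zero hH g) (hHg ▸ hH g⁻¹)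
  exact ⟨hne, hle.trans (Nat.mul_le_mul hMg (hHg ▸ hn g⁻¹))⟩

theorem relIndex_sSup_boundedConjInters_ne_zero (hne : (boundedConjInters H m).Nonempty) :
    H.relIndex (sSup (boundedConjInters H m)) ≠ 0 := by
  classical
  obtain ⟨K₀, hK₀⟩ := hne
  let J : Finset (boundedConjInters H m) → Subgroup G := fun t ↦
    (insert (⟨K₀, hK₀⟩ : boundedConjInters H m) t).sup Subtype.val
  have hJ : Monotone J := fun _ _ h ↦ Finset.sup_mono (Finset.insert_subset_insert _ h)
  have hle : sSup (boundedConjInters H m) ≤ ⨆ t, J t := sSup_le fun K hK ↦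
    le_iSup_of_le {⟨K, hK⟩} (Finset.le_sup (f := Subtype.val) (b := ⟨K, hK⟩) (by simp))
  refine fun h ↦ relIndex_iSup_ne_zero_of_directed H hJ.directed_le (k := m * n)
    (fun t ↦ ?_) (relIndex_eq_zero_of_le_right hle h)
  exact relIndex_finset_sup_boundedConjInters hH hn hmin (Finset.insert_nonempty _ _)
    fun i _ ↦ i.2

end MinimalBound

end Subgroup

/-- Bergman–Lenstra: if `[H : H ∩ gHg⁻¹]` is finite and at most `n` for every
`g ∈ G`, then there is a normal subgroup `N` of `G` commensurable with `H`. -/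
theorem bergman_lenstra {G : Type*} [Group G] (H : Subgroup G) (n : ℕ)
    (h : ∀ g : G, 0 < (H.map (MulAut.conj g).toMonoidHom).relIndex H ∧
      (H.map (MulAut.conj g).toMonoidHom).relIndex H ≤ n) :
    ∃ N : Subgroup G, N.Normal ∧ Subgroup.Commensurable H N := by
  have hH : ∀ g : ConjAct G, (g • H).relIndex H ≠ 0 := fun g ↦ (h (ConjAct.ofConjAct g)).1.ne'
  have hn : ∀ g : ConjAct G, (g • H).relIndex H ≤ n := fun g ↦ (h (ConjAct.ofConjAct g)).2
  obtain ⟨m, ⟨K₀, hK₀⟩, hmin⟩ := Subgroup.exists_min_boundedConjInters hn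
  refine ⟨sSup (H.boundedConjInters m), Subgroup.normal_sSup_of_smul_mem
    fun g _ hK ↦ Subgroup.smul_mem_boundedConjInters hK g, ?_, ?_⟩
  · exact Subgroup.relIndex_sSup_boundedConjInters_ne_zero hH hn hmin ⟨K₀, hK₀⟩
  · exact fun h ↦ hK₀.1.relIndex_ne_zero hH (Subgroup.relIndex_eq_zero_of_le_left (le_sSup hK₀) h)
end
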